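/- arXiv:2307.06446 — 5 statements merged into one kernel-verified Lean document; each statement's English description precedes it below -/
import Mathlib

section
/- Let L/M be a field extension that is not purely inseparable of finite exponent (i.e., there is no e ∈ ℕ with char M = p > 0 and a^{p^e} ∈ M for all a ∈ L, nor is L = M in characteristic 0 trivially of this form), and suppose L is infinite. Then there does not exist a nonconstant polynomial f ∈ M[x] such that f(d) ∈ M for all but finitely many d ∈ L. -/
/-!
Call `g ∈ M[X]` valued in `M` if `g(L) ⊆ M`. `M` is infinite, as otherwise `f` would take values
in `M` only finitely often. So a polynomial that maps infinitely many points of `M` into `M` has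
its coefficients in `M` (Lagrange interpolation over `M`); applied to the translates `f(X + a)`
this makes `f` valued in `M`. Take a valued `g` of minimal positive degree `m`. Its Hasse
derivatives and the polynomials `g(lX) - l^m g(X)`, `l ∈ M`, are again valued and of smaller
degree, hence constant. The first fact gives `binom(m, k) = 0` in `L` for `0 < k < m`, so `m = 1`
or `m` is a power of `p = char L`; the second gives `g = g₀ + g_m X^m`, so
`a^m = (g(a) - g₀) / g_m ∈ M` for every `a ∈ L`.
-/

/-- `L/M` is purely inseparable of finite exponent: either `L = M` (the trivial,
characteristic-zero, form), or `char L = p > 0` and there is `e` with `a^{p^e} ∈ M`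
for all `a ∈ L`. -/
def PurelyInsepFinExp {L : Type*} [Field L] (M : Subfield L) : Prop :=
  (∀ a : L, a ∈ M) ∨
    ∃ p e : ℕ, p.Prime ∧ CharP L p ∧ ∀ a : L, a ^ p ^ e ∈ M

open Polynomial Finset

section

variable {L : Type*} [Field L] {M : Subfield L}

theorem Polynomial.coeff_mem_of_eval_mem {T : Set L} (hT : T.Infinite) (hTM : T ⊆ M)
    {g : L[X]} (hg : ∀ x ∈ T, g.eval x ∈ M) (i : ℕ) : g.coeff i ∈ M := by
  have : Infinite T := hT.to_subtype
  obtain ⟨s, hs⟩ := Infinite.exists_subset_card_eq T (g.natDegree + 1)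
  classical
  let node : T → M := Set.inclusion hTM
  have hnode : Function.Injective node := Set.inclusion_injective hTM
  let q : M[X] := Lagrange.interpolate s node fun t => ⟨g.eval t, hg t t.2⟩
  have hq : q.degree < #s := Lagrange.degree_interpolate_lt _ hnode.injOn
  -- `g` agrees with the `M`-polynomial `q` at the `natDegree g + 1` nodes of `s`
  have hgq : g = q.map M.subtype := by
    refine Polynomial.eq_of_degree_sub_lt_of_eval_finset_eq (s.map (Function.Embedding.subtype _))
      ?_ ?_
    · rw [Finset.card_map]
      refine (degree_sub_le _ _).trans_lt (max_lt ?_ ((degree_map_le).trans_lt hq))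
      rw [hs]
      exact (degree_le_natDegree).trans_lt (by exact_mod_cast Nat.lt_succ_self _)
    · intro x hx
      obtain ⟨t, ht, rfl⟩ := Finset.mem_map.mp hx
      change _ = eval (M.subtype (node t)) (q.map M.subtype)
      rw [eval_map, eval₂_hom, Lagrange.eval_interpolate_at_node _ hnode.injOn ht]
      rfl
  rw [hgq, coeff_map]
  exact (q.coeff i).2

theorem Polynomial.finite_setOf_eval_mem {R : Type*} [CommRing R] [IsDomain R] {f : R[X]}
    (hf : 0 < f.natDegree) {S : Set R} (hS : S.Finite) : {d | f.eval d ∈ S}.Finite := by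
  refine hS.preimage' fun b _ => ?_
  have hfb : f - C b ≠ 0 := fun h => by
    rw [sub_eq_zero] at h
    rw [h, natDegree_C] at hf
    exact hf.false
  refine (finite_setOfPred_isRoot hfb).subset fun d hd => ?_
  simp_all [IsRoot]

theorem infinite_coe_of_finite_setOf_eval_notMem [Infinite L] {f : L[X]} (hf : 0 < f.natDegree)
    (hfin : {d | f.eval d ∉ M}.Finite) : (M : Set L).Infinite := fun hM =>
  Set.infinite_univ <| ((finite_setOf_eval_mem hf hM).union hfin).subset fun d _ =>
    em (f.eval d ∈ M)

theorem Set.Infinite.exists_pow_ne_pow {R : Type*} [CommRing R] [IsDomain R] {S : Set R}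
    (hS : S.Infinite) {i j : ℕ} (hij : i ≠ j) : ∃ l ∈ S, l ^ i ≠ l ^ j := by
  by_contra! h
  have hne : (X ^ i - X ^ j : R[X]) ≠ 0 := fun h0 => by
    simpa [coeff_X_pow, hij] using congrArg (coeff · i) h0
  exact hS ((finite_setOfPred_isRoot hne).subset fun x hx => by simp [h x hx])

variable (M) in
def Polynomial.IsValuedIn (g : L[X]) : Prop :=
  (∀ i, g.coeff i ∈ M) ∧ ∀ a, g.eval a ∈ M

namespace Polynomial.IsValuedIn

theorem of_finite_setOf_eval_notMem (hM : (M : Set L).Infinite) {f : L[X]}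
    (hcoeff : ∀ i, f.coeff i ∈ M) (hfin : {d | f.eval d ∉ M}.Finite) : IsValuedIn M f := by
  refine ⟨hcoeff, fun a => ?_⟩
  have hT : ((M : Set L) \ (· + a) ⁻¹' {d | f.eval d ∉ M}).Infinite :=
    hM.sdiff (hfin.preimage (add_left_injective a).injOn)
  rw [← taylor_coeff_zero]
  refine coeff_mem_of_eval_mem hT Set.sdiff_subset (fun x hx => ?_) 0
  simpa [taylor_eval] using hx.2

variable {g : L[X]}

theorem taylor (hM : (M : Set L).Infinite) (hg : IsValuedIn M g) (a : L) :
    IsValuedIn M (taylor a g) :=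
  have heval : ∀ x, (Polynomial.taylor a g).eval x ∈ M := fun x => by
    simpa [taylor_eval] using hg.2 (x + a)
  ⟨coeff_mem_of_eval_mem hM le_rfl fun x _ => heval x, heval⟩

theorem hasseDeriv (hM : (M : Set L).Infinite) (hg : IsValuedIn M g) (k : ℕ) :
    IsValuedIn M (hasseDeriv k g) :=
  ⟨fun j => by simpa [hasseDeriv_coeff] using mul_mem (natCast_mem M _) (hg.1 (j + k)),
    fun a => by simpa [taylor_coeff] using (hg.taylor hM a).1 k⟩

theorem comp_C_mul_X_sub (hg : IsValuedIn M g) {l : L} (hl : l ∈ M) (n : ℕ) :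
    IsValuedIn M (g.comp (C l * X) - C (l ^ n) * g) :=
  ⟨fun j => by
    rw [coeff_sub, comp_C_mul_X_coeff, coeff_C_mul]
    exact sub_mem (mul_mem (hg.1 j) (pow_mem hl j)) (mul_mem (pow_mem hl n) (hg.1 j)),
    fun a => by
    simpa using sub_mem (hg.2 (l * a)) (mul_mem (pow_mem hl n) (hg.2 a))⟩

end Polynomial.IsValuedIn

variable (M) in
def Polynomial.IsMinimalValuedIn (g : L[X]) : Prop :=
  IsValuedIn M g ∧ 0 < g.natDegree ∧
    ∀ h, IsValuedIn M h → h.natDegree < g.natDegree → h.natDegree = 0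

theorem Polynomial.IsValuedIn.exists_isMinimalValuedIn {f : L[X]} (hf : IsValuedIn M f)
    (hpos : 0 < f.natDegree) : ∃ g, IsMinimalValuedIn M g := by
  classical
  have hex : ∃ n, ∃ g, IsValuedIn M g ∧ 0 < g.natDegree ∧ g.natDegree = n :=
    ⟨_, f, hf, hpos, rfl⟩
  obtain ⟨g, hg, hgpos, hgn⟩ := Nat.find_spec hex
  refine ⟨g, hg, hgpos, fun h hh hlt => ?_⟩
  by_contra hne
  exact Nat.find_min hex (hgn ▸ hlt) ⟨h, hh, Nat.pos_of_ne_zero hne, rfl⟩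

namespace Polynomial.IsMinimalValuedIn

variable {g : L[X]}

theorem coeff_eq_zero_of_isValuedIn (hg : IsMinimalValuedIn M g) {h : L[X]}
    (hh : IsValuedIn M h) (hlt : h.natDegree < g.natDegree) {j : ℕ} (hj : 0 < j) :
    h.coeff j = 0 :=
  coeff_eq_zero_of_natDegree_lt (hg.2.2 h hh hlt ▸ hj)

theorem choose_natDegree_eq_zero (hg : IsMinimalValuedIn M g) (hM : (M : Set L).Infinite)
    {k : ℕ} (hk : 0 < k) (hkm : k < g.natDegree) : (g.natDegree.choose k : L) = 0 := by
  have hlead : g.coeff g.natDegree ≠ 0 :=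
    leadingCoeff_ne_zero.mpr (ne_zero_of_natDegree_gt hg.2.1)
  have hlt : (Polynomial.hasseDeriv k g).natDegree < g.natDegree :=
    (natDegree_hasseDeriv_le g k).trans_lt (by omega)
  have h0 := hg.coeff_eq_zero_of_isValuedIn (hg.1.hasseDeriv hM k) hlt
    (j := g.natDegree - k) (by omega)
  rw [hasseDeriv_coeff, Nat.sub_add_cancel hkm.le] at h0
  exact (mul_eq_zero.mp h0).resolve_right hlead

theorem coeff_eq_zero (hg : IsMinimalValuedIn M g) (hM : (M : Set L).Infinite) {i : ℕ}
    (hi : 0 < i) (him : i < g.natDegree) : g.coeff i = 0 := by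
  set m := g.natDegree
  obtain ⟨l, hlM, hl⟩ := hM.exists_pow_ne_pow him.ne
  set h := g.comp (C l * X) - C (l ^ m) * g
  have hcoeff : ∀ j, h.coeff j = g.coeff j * (l ^ j - l ^ m) := fun j => by
    simp only [h, coeff_sub, comp_C_mul_X_coeff, coeff_C_mul]
    ring
  have hlt : h.natDegree < m := by
    suffices h.natDegree ≤ m - 1 by omega
    refine natDegree_le_iff_coeff_eq_zero.mpr fun j hj => ?_
    rw [hcoeff]
    obtain rfl | hmj := (show m ≤ j by omega).eq_or_lt
    · rw [sub_self, mul_zero]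
    · rw [coeff_eq_zero_of_natDegree_lt hmj, zero_mul]
  have h0 := hg.coeff_eq_zero_of_isValuedIn (hg.1.comp_C_mul_X_sub hlM m) hlt hi
  rw [hcoeff] at h0
  exact (mul_eq_zero.mp h0).resolve_right (sub_ne_zero.mpr hl)

theorem pow_natDegree_mem (hg : IsMinimalValuedIn M g) (hM : (M : Set L).Infinite) (a : L) :
    a ^ g.natDegree ∈ M := by
  set m := g.natDegree
  have hm : 0 < m := hg.2.1
  have hsplit : g = C (g.coeff 0) + C (g.coeff m) * X ^ m := by
    ext j
    simp only [coeff_add, coeff_C, coeff_C_mul, coeff_X_pow]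
    rcases Nat.eq_zero_or_pos j with rfl | hj
    · simp [hm.ne]
    rcases lt_trichotomy j m with hjm | rfl | hjm
    · simp [hj.ne', hjm.ne, hg.coeff_eq_zero hM hj hjm]
    · simp [hj.ne']
    · simp [hj.ne', hjm.ne', coeff_eq_zero_of_natDegree_lt hjm]
  have hlead : g.coeff m ≠ 0 := leadingCoeff_ne_zero.mpr (ne_zero_of_natDegree_gt hm)
  have heval := hg.1.2 a
  rw [hsplit, eval_add, eval_C, eval_mul, eval_C, eval_pow, eval_X] at heval
  have ha : a ^ m = (g.coeff m)⁻¹ * (g.coeff 0 + g.coeff m * a ^ m - g.coeff 0) := by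
    field_simp
    ring
  rw [ha]
  exact mul_mem (inv_mem (hg.1.1 m)) (sub_mem heval (hg.1.1 0))

end Polynomial.IsMinimalValuedIn

theorem exists_prime_charP_eq_pow_of_choose_eq_zero {R : Type*} [CommRing R] [IsDomain R]
    {m : ℕ} (hm : 1 < m) (h : ∀ k, 0 < k → k < m → (m.choose k : R) = 0) :
    ∃ p e : ℕ, p.Prime ∧ CharP R p ∧ m = p ^ e := by
  rcases CharP.char_is_prime_or_zero R (ringChar R) with hp | h0
  · have : Fact (ringChar R).Prime := ⟨hp⟩
    refine ⟨_, _, hp, ringChar.charP R,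
      Choose.eq_pow_multiplicity_of_choose_modEq_zero (by omega) fun i hi => ?_⟩
    rw [Finset.mem_Icc] at hi
    refine Int.modEq_zero_iff_dvd.mpr ((CharP.intCast_eq_zero_iff R _ _).mp ?_)
    exact_mod_cast h i (by omega) (by omega)
  · have hm0 := h 1 one_pos hm
    rw [Nat.choose_one_right, ringChar.spec, h0] at hm0
    omega

theorem purelyInsepFinExp_of_isValuedIn (hM : (M : Set L).Infinite) {f : L[X]}
    (hf : IsValuedIn M f) (hpos : 0 < f.natDegree) : PurelyInsepFinExp M := by
  obtain ⟨g, hg⟩ := hf.exists_isMinimalValuedIn hpos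
  obtain hm | hm := (Nat.succ_le_of_lt hg.2.1).eq_or_lt
  · exact Or.inl fun a => by simpa [← hm] using hg.pow_natDegree_mem hM a
  · obtain ⟨p, e, hp, hchar, hpe⟩ :=
      exists_prime_charP_eq_pow_of_choose_eq_zero hm fun k hk hkm =>
        hg.choose_natDegree_eq_zero hM hk hkm
    exact Or.inr ⟨p, e, hp, hchar, fun a => hpe ▸ hg.pow_natDegree_mem hM a⟩

end

theorem stmt12 {L : Type*} [Field L] [Infinite L] (M : Subfield L)
    (h : ¬ PurelyInsepFinExp M) :
    ¬ ∃ f : Polynomial L, (∀ i, f.coeff i ∈ M) ∧ 0 < f.natDegree ∧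
      {d : L | f.eval d ∉ M}.Finite := by
  rintro ⟨f, hcoeff, hpos, hfin⟩
  have hM : (M : Set L).Infinite := infinite_coe_of_finite_setOf_eval_notMem hpos hfin
  exact h (purelyInsepFinExp_of_isValuedIn hM (.of_finite_setOf_eval_notMem hM hcoeff hfin) hpos)
end

section
/- Let L/M be a field extension that is not purely inseparable of finite exponent, and suppose L is infinite. Then there does not exist a nonconstant rational function φ ∈ M(x) such that φ(d) ∈ M for all but finitely many d ∈ L. -/
/-!
Write `φ = f / g` with `f, g ∈ M[X]` and let `N = max (deg f) (deg g)`. All but finitely many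
`d ∈ L` are roots of some `f - c g` with `c ∈ M`, hence algebraic over `M` of degree at most `N`;
in particular `M` is infinite. If `d'` is a conjugate of such a `d` over `M`, then for infinitely
many `m ∈ M` the value `φ(d + m)` lies in `M` and therefore equals `φ(d' + m)`, so
`φ(X + d) = φ(X + d')`. Applied to `c d` and its conjugate `c d'` for every `c ∈ M`, this gives `φ`
the infinitely many periods `c (d' - d)`, which forces `φ` to be constant unless `d' = d`. Hence the
minimal polynomial of `d` has a single root, so `d ^ q ^ n ∈ M` with `q ^ n ≤ N` for the exponential
characteristic `q`; as every element of `L` is a sum of two such `d`, `a ^ q ^ N ∈ M` for all `a`.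
-/

open Polynomial

section Pencil

variable {M K : Type*} [Field M] [CommRing K] [Algebra M K] {f g : M[X]}

/-- `x` is a root of a member `f - c g`, `c ∈ M`, of the pencil spanned by `f` and `g`; away from
the zeros of `g` this says `f(x) / g(x) ∈ M`. -/
def IsPencilRoot (f g : M[X]) (x : K) : Prop :=
  ∃ c : M, aeval x (f - C c * g) = 0

theorem IsPencilRoot.map {K' : Type*} [CommRing K'] [Algebra M K'] (φ : K →ₐ[M] K') {x : K}
    (hx : IsPencilRoot f g x) : IsPencilRoot f g (φ x) := by
  obtain ⟨c, hc⟩ := hx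
  exact ⟨c, by rw [aeval_algHom_apply, hc, map_zero]⟩

theorem IsPencilRoot.isIntegral (hnc : ∀ c : M, f ≠ C c * g) {x : K} (hx : IsPencilRoot f g x) :
    IsIntegral M x := by
  obtain ⟨c, hc⟩ := hx
  exact IsAlgebraic.isIntegral ⟨_, sub_ne_zero.mpr (hnc c), hc⟩

theorem IsPencilRoot.natDegree_minpoly_le (hnc : ∀ c : M, f ≠ C c * g) {x : K}
    (hx : IsPencilRoot f g x) : (minpoly M x).natDegree ≤ max f.natDegree g.natDegree := by
  obtain ⟨c, hc⟩ := hx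
  calc (minpoly M x).natDegree ≤ (f - C c * g).natDegree :=
        natDegree_le_natDegree (minpoly.degree_le_of_ne_zero M x (sub_ne_zero.mpr (hnc c)) hc)
    _ ≤ max f.natDegree g.natDegree :=
        (natDegree_sub_le _ _).trans (max_le_max le_rfl (natDegree_C_mul_le _ _))

theorem IsConjRoot.aeval_eq_zero_of_aeval_eq_zero {x y : K} {p : M[X]} (h : IsConjRoot M x y)
    (hp : aeval x p = 0) : aeval y p = 0 := by
  obtain ⟨q, rfl⟩ := minpoly.dvd M x hp
  rw [map_mul, h.aeval_eq_zero, zero_mul]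

variable [IsDomain K]

theorem finite_setOf_isPencilRoot [Finite M] (hnc : ∀ c : M, f ≠ C c * g) :
    {x : K | IsPencilRoot f g x}.Finite := by
  refine (Set.finite_iUnion fun c : M => finite_setOfPred_isRoot <|
    (Polynomial.map_ne_zero_iff (algebraMap M K).injective).mpr (sub_ne_zero.mpr (hnc c))).subset ?_
  rintro x ⟨c, hc⟩
  exact Set.mem_iUnion.mpr ⟨c, by rwa [Set.mem_ofPred_eq, IsRoot, eval_map_algebraMap]⟩

theorem infinite_of_finite_setOf_not_isPencilRoot [Infinite K] (hnc : ∀ c : M, f ≠ C c * g)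
    (hS : {x : K | ¬ IsPencilRoot f g x}.Finite) : Infinite M := by
  refine not_finite_iff_infinite.mp fun _ => Set.infinite_univ (α := K) ?_
  exact ((finite_setOf_isPencilRoot hnc).union hS).subset fun _ _ => em _

theorem infinite_setOf_isPencilRoot_add [Infinite M] (hS : {x : K | ¬ IsPencilRoot f g x}.Finite)
    (x : K) : {m : M | IsPencilRoot f g (x + algebraMap M K m)}.Infinite := by
  have hinj : Function.Injective fun m : M => x + algebraMap M K m :=
    (add_right_injective x).comp (algebraMap M K).injective
  simpa [Set.compl_ofPred] using (hS.preimage hinj.injOn).infinite_compl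

theorem IsConjRoot.algebraMap_mul {x y : K} (hx : IsIntegral M x) (h : IsConjRoot M x y) (r : M) :
    IsConjRoot M (algebraMap M K r * x) (algebraMap M K r * y) := by
  refine isConjRoot_of_aeval_eq_zero (isIntegral_algebraMap.mul hx) ?_
  have hcomp (z : K) : aeval z ((minpoly M (algebraMap M K r * x)).comp (C r * X)) =
      aeval (algebraMap M K r * z) (minpoly M (algebraMap M K r * x)) := by
    simp [aeval_comp]
  rw [← hcomp]
  exact h.aeval_eq_zero_of_aeval_eq_zero (by rw [hcomp, minpoly.aeval])

theorem IsConjRoot.aeval_add_mul_aeval_add_eq {x y : K} (h : IsConjRoot M x y)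
    (hinf : {m : M | IsPencilRoot f g (x + algebraMap M K m)}.Infinite) (z : K) :
    aeval (x + z) f * aeval (y + z) g = aeval (y + z) f * aeval (x + z) g := by
  let f' := f.map (algebraMap M K)
  let g' := g.map (algebraMap M K)
  let P : K[X] := f'.comp (X + C x) * g'.comp (X + C y) - f'.comp (X + C y) * g'.comp (X + C x)
  have hP (z : K) :
      P.eval z = aeval (x + z) f * aeval (y + z) g - aeval (y + z) f * aeval (x + z) g := by
    simp [P, f', g', eval_comp, eval_map_algebraMap, add_comm]
  suffices P = 0 by simpa [hP, sub_eq_zero] using congrArg (eval z) this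
  refine eq_zero_of_infinite_isRoot P ((hinf.image (algebraMap M K).injective.injOn).mono ?_)
  rintro _ ⟨m, ⟨c, hc⟩, rfl⟩
  have hc' := (h.add_algebraMap m).aeval_eq_zero_of_aeval_eq_zero hc
  simp only [map_sub, map_mul, aeval_C, sub_eq_zero] at hc hc'
  show P.eval _ = 0
  rw [hP, hc, hc']
  ring

theorem eq_C_mul_of_infinite_setOf_aeval_mul_eq {x₀ : M} (hx₀ : g.eval x₀ ≠ 0)
    (h : {y : K | aeval y f * algebraMap M K (g.eval x₀) =
      algebraMap M K (f.eval x₀) * aeval y g}.Infinite) :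
    f = C (f.eval x₀ / g.eval x₀) * g := by
  have hP : f * C (g.eval x₀) - C (f.eval x₀) * g = 0 := by
    apply Polynomial.map_injective (algebraMap M K) (algebraMap M K).injective
    rw [Polynomial.map_zero]
    refine eq_zero_of_infinite_isRoot _ (h.mono fun y hy => ?_)
    simpa [eval_map_algebraMap, sub_eq_zero] using hy
  rw [sub_eq_zero] at hP
  apply mul_right_cancel₀ (C_ne_zero.mpr hx₀)
  rw [hP, mul_right_comm, ← C_mul, div_mul_cancel₀ _ hx₀]

theorem IsConjRoot.eq_of_forall_infinite_isPencilRoot [Infinite M] (hg : g ≠ 0)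
    (hnc : ∀ c : M, f ≠ C c * g) {x y : K} (hx : IsIntegral M x) (h : IsConjRoot M x y)
    (hshift : ∀ c : M,
      {m : M | IsPencilRoot f g (algebraMap M K c * x + algebraMap M K m)}.Infinite) :
    y = x := by
  by_contra hne
  obtain ⟨x₀, hx₀⟩ : ∃ x₀ : M, g.eval x₀ ≠ 0 := (finite_setOfPred_isRoot hg).infinite_compl.nonempty
  set φ := algebraMap M K
  have hinj : Function.Injective fun c : M => φ x₀ + φ c * (y - x) := fun c c' hcc' =>
    φ.injective (mul_right_cancel₀ (sub_ne_zero.mpr hne) (add_left_cancel hcc'))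
  refine hnc _ (eq_C_mul_of_infinite_setOf_aeval_mul_eq hx₀
    ((Set.infinite_range_of_injective hinj).mono ?_))
  rintro _ ⟨c, rfl⟩
  have key := (h.algebraMap_mul hx c).aeval_add_mul_aeval_add_eq (hshift c) (φ x₀ - φ c * x)
  rw [show φ c * x + (φ x₀ - φ c * x) = φ x₀ by ring,
    show φ c * y + (φ x₀ - φ c * x) = φ x₀ + φ c * (y - x) by ring] at key
  simp only [φ, aeval_algebraMap_apply_eq_algebraMap_eval] at key
  exact key.symm

theorem pow_expChar_pow_mem_range_of_natSepDegree_eq_one (q : ℕ) [ExpChar M q] {x : K} {N : ℕ}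
    (h : (minpoly M x).natSepDegree = 1) (hN : (minpoly M x).natDegree ≤ N) :
    x ^ q ^ N ∈ (algebraMap M K).range := by
  obtain ⟨n, y, hmin⟩ := (minpoly.natSepDegree_eq_one_iff_eq_X_pow_sub_C q).mp h
  have hxy : x ^ q ^ n = algebraMap M K y := by
    have hroot := minpoly.aeval M x
    rw [hmin] at hroot
    simpa [sub_eq_zero] using hroot
  have hdvd : q ^ n ∣ q ^ N := by
    rcases expChar_is_prime_or_one M q with hq | rfl
    · rw [hmin, natDegree_X_pow_sub_C] at hN
      exact pow_dvd_pow q ((Nat.lt_pow_self hq.one_lt).le.trans hN)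
    · simp
  obtain ⟨k, hk⟩ := hdvd
  rw [hk, pow_mul, hxy, ← map_pow]
  exact ⟨_, rfl⟩

end Pencil

theorem natSepDegree_minpoly_eq_one_of_forall_isConjRoot {M K : Type*} [Field M] [Field K]
    [Algebra M K] [IsAlgClosed K] {x : K}
    (hx : IsIntegral M x) (h : ∀ y, IsConjRoot M x y → y = x) :
    (minpoly M x).natSepDegree = 1 := by
  classical
  rw [natSepDegree_eq_of_isAlgClosed K, Finset.card_eq_one]
  refine ⟨x, Finset.ext fun y => ?_⟩
  rw [Multiset.mem_toFinset, ← isConjRoot_iff_mem_minpoly_aroots hx, Finset.mem_singleton]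
  exact ⟨h y, fun hy => hy ▸ IsConjRoot.refl⟩

theorem exists_add_eq_of_finite_compl {G : Type*} [AddGroup G] [Infinite G] {S : Set G}
    (hS : Sᶜ.Finite) (a : G) : ∃ s ∈ S, ∃ t ∈ S, s + t = a := by
  have hinj : Function.Injective fun s : G => -s + a := fun _ _ h =>
    neg_injective (add_right_cancel h)
  obtain ⟨s, hs⟩ := (hS.union (hS.preimage hinj.injOn)).infinite_compl.nonempty
  simp only [Set.mem_compl_iff, Set.mem_union, Set.mem_preimage, not_or, not_not] at hs
  exact ⟨s, hs.1, -s + a, hs.2, add_neg_cancel_left s a⟩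

section Extension

variable {M L : Type*} [Field M] [Field L] [Algebra M L] {f g : M[X]}

theorem natSepDegree_minpoly_eq_one_of_isPencilRoot [Infinite M] (hg : g ≠ 0)
    (hnc : ∀ c : M, f ≠ C c * g)
    (hshift : ∀ x : L, {m : M | IsPencilRoot f g (x + algebraMap M L m)}.Infinite) {x : L}
    (hx : IsPencilRoot f g x) : (minpoly M x).natSepDegree = 1 := by
  let ι : L →ₐ[M] AlgebraicClosure L := IsScalarTower.toAlgHom M L _
  have hιx : IsIntegral M (ι x) := (hx.map ι).isIntegral hnc
  rw [← minpoly.algHom_eq ι ι.injective x]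
  refine natSepDegree_minpoly_eq_one_of_forall_isConjRoot hιx fun y hy =>
    hy.eq_of_forall_infinite_isPencilRoot hg hnc hιx fun c => (hshift (algebraMap M L c * x)).mono
      fun m hm => ?_
  simpa using hm.map ι

theorem pow_expChar_pow_mem_range_of_finite_setOf_not_isPencilRoot [Infinite L] (q : ℕ)
    [ExpChar M q] (hg : g ≠ 0) (hnc : ∀ c : M, f ≠ C c * g)
    (hS : {x : L | ¬ IsPencilRoot f g x}.Finite) (a : L) :
    a ^ q ^ max f.natDegree g.natDegree ∈ (algebraMap M L).range := by
  have : Infinite M := infinite_of_finite_setOf_not_isPencilRoot hnc hS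
  have : ExpChar L q := expChar_of_injective_algebraMap (algebraMap M L).injective q
  have hpow (x : L) (hx : IsPencilRoot f g x) :
      x ^ q ^ max f.natDegree g.natDegree ∈ (algebraMap M L).range :=
    pow_expChar_pow_mem_range_of_natSepDegree_eq_one q
      (natSepDegree_minpoly_eq_one_of_isPencilRoot hg hnc (infinite_setOf_isPencilRoot_add hS) hx)
      (hx.natDegree_minpoly_le hnc)
  obtain ⟨s, hs, t, ht, rfl⟩ := exists_add_eq_of_finite_compl hS a
  rw [add_pow_expChar_pow]
  exact add_mem (hpow s hs) (hpow t ht)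

end Extension

theorem purelyInsepFinExp_of_forall_pow_mem {L : Type*} [Field L] (M : Subfield L) (q e : ℕ)
    [ExpChar L q] (h : ∀ a : L, a ^ q ^ e ∈ M) : PurelyInsepFinExp M := by
  rcases ‹ExpChar L q› with _ | ⟨hq⟩
  · exact Or.inl (by simpa using h)
  · exact Or.inr ⟨q, e, hq, ‹_›, h⟩

theorem RatFunc.eval_algebraMap_div_algebraMap {K : Type*} [Field K] {f g : K[X]} {a : K}
    (ha : g.eval a ≠ 0) :
    RatFunc.eval (RingHom.id K) a (algebraMap K[X] (RatFunc K) f / algebraMap K[X] (RatFunc K) g) =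
      f.eval a / g.eval a := by
  set r := algebraMap K[X] (RatFunc K) f / algebraMap K[X] (RatFunc K) g
  have hg : g ≠ 0 := by rintro rfl; exact ha (Polynomial.eval_zero)
  have hden : r.denom.eval a ≠ 0 := fun h0 =>
    ha (zero_dvd_iff.mp (h0 ▸ eval_dvd (RatFunc.denom_div_dvd f g)))
  have hcross : r.num * g = f * r.denom := by
    apply RatFunc.algebraMap_injective K
    rw [map_mul, map_mul, ← div_eq_div_iff (RatFunc.algebraMap_ne_zero r.denom_ne_zero)
      (RatFunc.algebraMap_ne_zero hg), RatFunc.num_div_denom]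
  show r.num.eval a / r.denom.eval a = _
  rw [div_eq_div_iff hden ha]
  simpa only [Polynomial.eval_mul] using congrArg (Polynomial.eval a) hcross

theorem finite_setOf_not_isPencilRoot_of_finite_setOf_eval_notMem {L : Type*} [Field L]
    {M : Subfield L} {f g : M[X]} (hg : g.map (algebraMap M L) ≠ 0)
    (hfin : {d : L | RatFunc.eval (RingHom.id L) d
      (algebraMap L[X] (RatFunc L) (f.map (algebraMap M L)) /
        algebraMap L[X] (RatFunc L) (g.map (algebraMap M L))) ∉ M}.Finite) :
    {x : L | ¬ IsPencilRoot f g x}.Finite := by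
  refine ((finite_setOfPred_isRoot hg).union hfin).subset fun x hx => ?_
  by_cases hgx : (g.map (algebraMap M L)).eval x = 0
  · exact Or.inl hgx
  refine Or.inr fun hxM => hx ⟨⟨_, hxM⟩, ?_⟩
  rw [map_sub, map_mul, aeval_C, ← eval_map_algebraMap, ← eval_map_algebraMap,
    show algebraMap M L ⟨_, hxM⟩ = _ from RatFunc.eval_algebraMap_div_algebraMap hgx,
    div_mul_cancel₀ _ hgx, sub_self]

theorem stmt13 {L : Type*} [Field L] [Infinite L] (M : Subfield L)
    (h : ¬ PurelyInsepFinExp M) :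
    ¬ ∃ f g : Polynomial L, (∀ i, f.coeff i ∈ M) ∧ (∀ i, g.coeff i ∈ M) ∧ g ≠ 0 ∧
      (¬ ∃ c : L, algebraMap (Polynomial L) (RatFunc L) f /
          algebraMap (Polynomial L) (RatFunc L) g = RatFunc.C c) ∧
      {d : L | RatFunc.eval (RingHom.id L) d
          (algebraMap (Polynomial L) (RatFunc L) f /
            algebraMap (Polynomial L) (RatFunc L) g) ∉ M}.Finite := by
  rintro ⟨f, g, hfM, hgM, hg, hnc, hfin⟩
  have lift (p : L[X]) (hp : ∀ i, p.coeff i ∈ M) : ∃ p₀ : M[X], p₀.map (algebraMap M L) = p :=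
    (lifts_iff_coeff_lifts p).mpr fun i => ⟨⟨_, hp i⟩, rfl⟩
  obtain ⟨f₀, rfl⟩ := lift f hfM
  obtain ⟨g₀, rfl⟩ := lift g hgM
  have hg₀ : g₀ ≠ 0 := by rintro rfl; exact hg (Polynomial.map_zero _)
  have hnc₀ (c : M) : f₀ ≠ C c * g₀ := by
    rintro rfl
    refine hnc ⟨c, ?_⟩
    rw [Polynomial.map_mul, map_C, map_mul, RatFunc.algebraMap_C, mul_div_assoc,
      div_self (RatFunc.algebraMap_ne_zero hg), mul_one]
    rfl
  have hS := finite_setOf_not_isPencilRoot_of_finite_setOf_eval_notMem hg hfin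
  obtain ⟨q, _⟩ := ExpChar.exists M
  have : ExpChar L q := expChar_of_injective_algebraMap (algebraMap M L).injective q
  refine h (purelyInsepFinExp_of_forall_pow_mem M q (max f₀.natDegree g₀.natDegree) fun a => ?_)
  obtain ⟨b, hb⟩ := pow_expChar_pow_mem_range_of_finite_setOf_not_isPencilRoot q hg₀ hnc₀ hS a
  exact hb ▸ b.2
end

section
/- Let D be a domain with field of fractions K, let E ⊆ K be infinite, and let L be a field extension of K. If φ ∈ L(x) satisfies φ(a) ∈ D for all a ∈ E (in particular φ is defined at each point of E), then φ ∈ K(x). -/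
open Polynomial

/-- Apply a linear map coefficientwise to a polynomial. -/
noncomputable def stmt14.lmap {K L : Type*} [Field K] [Field L] [Algebra K L]
    (f : L →ₗ[K] L) (p : L[X]) : L[X] :=
  p.sum fun n c => Polynomial.C (f c) * Polynomial.X ^ n

namespace stmt14

variable {K L : Type*} [Field K] [Field L] [Algebra K L]

lemma lmap_coeff (f : L →ₗ[K] L) (p : L[X]) (n : ℕ) :
    (lmap f p).coeff n = f (p.coeff n) := by
  rw [lmap, Polynomial.sum, finset_sum_coeff]
  simp only [coeff_C_mul, coeff_X_pow, mul_ite, mul_one, mul_zero]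
  rw [Finset.sum_ite_eq p.support n (fun m => f (p.coeff m))]
  split_ifs with hn
  · rfl
  · rw [notMem_support_iff.mp hn, map_zero]

lemma lmap_eval (f : L →ₗ[K] L) (p : L[X]) (a : K) :
    (lmap f p).eval (algebraMap K L a) = f (p.eval (algebraMap K L a)) := by
  rw [lmap, Polynomial.sum, eval_finset_sum]
  conv_rhs => rw [Polynomial.eval_eq_sum, Polynomial.sum, map_sum]
  refine Finset.sum_congr rfl fun n _ => ?_
  simp only [eval_mul, eval_C, eval_pow, eval_X]
  rw [← map_pow (algebraMap K L), mul_comm (p.coeff n), ← Algebra.smul_def, map_smul,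
    Algebra.smul_def, mul_comm]

end stmt14

theorem stmt14 {K L : Type*} [Field K] [Field L] [Algebra K L]
    (D : Subring K) [IsFractionRing D K] (E : Set K) (hE : E.Infinite)
    (φ : RatFunc L)
    (h : ∀ a ∈ E, (RatFunc.denom φ).eval (algebraMap K L a) ≠ 0 ∧
      RatFunc.eval (RingHom.id L) (algebraMap K L a) φ ∈ D.map (algebraMap K L)) :
    (∀ i, (RatFunc.num φ).coeff i ∈ (algebraMap K L).range) ∧
    (∀ i, (RatFunc.denom φ).coeff i ∈ (algebraMap K L).range) := by
  classical
  have hinj : Function.Injective (algebraMap K L) := (algebraMap K L).injective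
  set P : L[X] := RatFunc.num φ with hP
  set Q : L[X] := RatFunc.denom φ with hQ
  have hQ0 : Q ≠ 0 := RatFunc.denom_ne_zero φ
  have hQmonic : Q.Monic := RatFunc.monic_denom φ
  -- Main step: every K-linear map killing the image of K kills all coefficients of P, Q.
  have main : ∀ f : L →ₗ[K] L, (∀ k : K, f (algebraMap K L k) = 0) →
      ∀ i, f (P.coeff i) = 0 ∧ f (Q.coeff i) = 0 := by
    intro f hf
    -- the relation at each point of E
    have hrel : ∀ a ∈ E,
        ((stmt14.lmap f P) * Q - P * (stmt14.lmap f Q)).eval (algebraMap K L a) = 0 := by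
      intro a ha
      obtain ⟨hden, hmem⟩ := h a ha
      obtain ⟨d, _, hd⟩ := Subring.mem_map.mp hmem
      have heval : RatFunc.eval (RingHom.id L) (algebraMap K L a) φ
          = P.eval (algebraMap K L a) / Q.eval (algebraMap K L a) := rfl
      rw [heval] at hd
      have hPQ : P.eval (algebraMap K L a) = algebraMap K L d * Q.eval (algebraMap K L a) :=
        (div_eq_iff hden).mp hd.symm
      have hfP : f (P.eval (algebraMap K L a)) =
          algebraMap K L d * f (Q.eval (algebraMap K L a)) := by
        rw [hPQ, ← Algebra.smul_def, map_smul, Algebra.smul_def]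
      simp only [eval_sub, eval_mul, stmt14.lmap_eval]
      linear_combination Q.eval (algebraMap K L a) * hfP
        - f (Q.eval (algebraMap K L a)) * hPQ
    -- so the polynomial vanishes identically
    have hS : (stmt14.lmap f P) * Q - P * (stmt14.lmap f Q) = 0 := by
      apply Polynomial.eq_zero_of_infinite_isRoot
      refine Set.Infinite.mono ?_ (hE.image hinj.injOn)
      rintro x ⟨a, ha, rfl⟩
      exact hrel a ha
    have hSeq : (stmt14.lmap f P) * Q = P * (stmt14.lmap f Q) := sub_eq_zero.mp hS
    -- Q divides lmap f Q, which has smaller degree, hence lmap f Q = 0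
    have hdvd : Q ∣ stmt14.lmap f Q := by
      refine (RatFunc.isCoprime_num_denom φ).symm.dvd_of_dvd_mul_left ?_
      exact ⟨stmt14.lmap f P, by rw [← hSeq, mul_comm]⟩
    have hcoeffQ : ∀ m : ℕ, Q.natDegree ≤ m → (stmt14.lmap f Q).coeff m = 0 := by
      intro m hm
      rw [stmt14.lmap_coeff]
      rcases eq_or_lt_of_le hm with hm | hm
      · rw [← hm, hQmonic.coeff_natDegree, ← map_one (algebraMap K L), hf]
      · rw [Polynomial.coeff_eq_zero_of_natDegree_lt hm, map_zero]
    have hfQ : stmt14.lmap f Q = 0 := by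
      refine Polynomial.eq_zero_of_dvd_of_degree_lt hdvd ?_
      calc (stmt14.lmap f Q).degree < (Q.natDegree : WithBot ℕ) :=
            (Polynomial.degree_lt_iff_coeff_zero _ _).mpr (by exact_mod_cast hcoeffQ)
        _ = Q.degree := (Polynomial.degree_eq_natDegree hQ0).symm
    have hfP : stmt14.lmap f P = 0 := by
      have : (stmt14.lmap f P) * Q = 0 := by rw [hSeq, hfQ, mul_zero]
      exact (mul_eq_zero.mp this).resolve_right hQ0
    intro i
    constructor
    · rw [← stmt14.lmap_coeff f P i, hfP, Polynomial.coeff_zero]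
    · rw [← stmt14.lmap_coeff f Q i, hfQ, Polynomial.coeff_zero]
  -- From the main step, deduce each coefficient is in the image of K.
  have final : ∀ c : L, (∀ f : L →ₗ[K] L, (∀ k : K, f (algebraMap K L k) = 0) → f c = 0) →
      c ∈ (algebraMap K L).range := by
    intro c hc
    by_contra hcr
    set W : Submodule K L := Submodule.span K {(1 : L)} with hW
    have hmemW : ∀ x : L, x ∈ W ↔ x ∈ (algebraMap K L).range := by
      intro x
      rw [hW, Submodule.mem_span_singleton]
      constructor
      · rintro ⟨k, rfl⟩; exact ⟨k, Algebra.algebraMap_eq_smul_one k⟩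
      · rintro ⟨k, rfl⟩; exact ⟨k, (Algebra.algebraMap_eq_smul_one (A := L) k).symm⟩
    have hcW : W.mkQ c ≠ 0 := by
      intro h0
      rw [Submodule.mkQ_apply, Submodule.Quotient.mk_eq_zero] at h0
      exact hcr ((hmemW c).mp h0)
    obtain ⟨g, hg⟩ : ∃ g : Module.Dual K (L ⧸ W), g (W.mkQ c) ≠ 0 := by
      by_contra hg
      push_neg at hg
      exact hcW ((Module.forall_dual_apply_eq_zero_iff K (W.mkQ c)).mp hg)
    set f : L →ₗ[K] L := (Algebra.linearMap K L).comp (g.comp W.mkQ) with hfdef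
    have hfk : ∀ k : K, f (algebraMap K L k) = 0 := by
      intro k
      have : W.mkQ (algebraMap K L k) = 0 := by
        rw [Submodule.mkQ_apply, Submodule.Quotient.mk_eq_zero]
        exact (hmemW _).mpr ⟨k, rfl⟩
      simp [hfdef, this]
    have : f c = 0 := hc f hfk
    rw [hfdef] at this
    simp only [LinearMap.comp_apply, Algebra.linearMap_apply] at this
    exact hg (hinj (by simpa using this))
  exact ⟨fun i => final _ fun f hf => (main f hf i).1,
    fun i => final _ fun f hf => (main f hf i).2⟩
end

section
/- Let L/M be a field extension that is not purely inseparable of finite exponent, with L infinite. Then there does not exist a nonconstant rational function φ ∈ L(x) (coefficients allowed in the larger field L) such that φ(d) ∈ M for all but finitely many d ∈ L. -/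
open Polynomial Module Filter

theorem exists_eval_eq_mul_eval {K : Type*} [Field K] {k : ℕ} (n d : ℕ) (hk : k ≤ n + d + 1)
    (t c : Fin k → K) :
    ∃ A B : K[X], (A ≠ 0 ∨ B ≠ 0) ∧ A.natDegree ≤ n ∧ B.natDegree ≤ d ∧
      ∀ i, A.eval (t i) = c i * B.eval (t i) := by
  let Φ : degreeLT K (n + 1) × degreeLT K (d + 1) →ₗ[K] Fin k → K := LinearMap.pi fun i =>
    leval (t i) ∘ₗ (degreeLT K (n + 1)).subtype ∘ₗ LinearMap.fst K _ _ -
      c i • (leval (t i) ∘ₗ (degreeLT K (d + 1)).subtype ∘ₗ LinearMap.snd K _ _)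
  have hrank : finrank K (Fin k → K) < finrank K (degreeLT K (n + 1) × degreeLT K (d + 1)) := by
    simp only [finrank_prod, (degreeLTEquiv K _).finrank_eq, finrank_fin_fun]
    omega
  obtain ⟨⟨⟨A, hA⟩, ⟨B, hB⟩⟩, hker, hne⟩ :=
    Submodule.exists_mem_ne_zero_of_ne_bot (Φ.ker_ne_bot_of_finrank_lt hrank)
  rw [degreeLT_succ_eq_degreeLE, mem_degreeLE, ← natDegree_le_iff_degree_le] at hA hB
  refine ⟨A, B, ?_, hA, hB, fun i => ?_⟩
  · contrapose! hne
    simp [hne]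
  · have hi := congrFun hker i
    simp only [LinearMap.pi_apply, LinearMap.sub_apply, LinearMap.smul_apply, LinearMap.coe_comp,
      Function.comp_apply, LinearMap.fst_apply, LinearMap.snd_apply, Submodule.subtype_apply,
      leval_apply, smul_eq_mul, Pi.zero_apply, Φ] at hi
    exact sub_eq_zero.mp hi

section Descent

variable {L : Type*} [Field L] {M : Subfield L}

theorem exists_map_mul_eq_map_mul {N D : L[X]} {T : Set M} (hT : T.Infinite)
    (hNT : ∀ t ∈ T, ∃ c : M, N.eval ↑t = c * D.eval ↑t) :
    ∃ A B : M[X], B ≠ 0 ∧ B.natDegree ≤ D.natDegree ∧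
      A.map M.subtype * D = B.map M.subtype * N := by
  have : Infinite T := hT.to_subtype
  let t : Fin (N.natDegree + D.natDegree + 1) ↪ M :=
    (Fin.valEmbedding.trans (Infinite.natEmbedding T)).trans (Function.Embedding.subtype _)
  choose c hc using fun i => hNT (t i) (Subtype.property _)
  obtain ⟨A, B, hAB, hA, hB, hABt⟩ := exists_eval_eq_mul_eval _ _ le_rfl t c
  have hmap_eval (P : M[X]) (x : M) : (P.map M.subtype).eval (x : L) = P.eval x :=
    eval_map_apply (f := M.subtype) x
  have hB0 : B ≠ 0 := by
    rintro rfl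
    have hA0 : A = 0 := eq_zero_of_natDegree_lt_card_of_eval_eq_zero A t.injective
      (by simpa using hABt) (by simp only [Fintype.card_fin]; omega)
    simp [hA0] at hAB
  -- `A D - B N` has degree at most `deg N + deg D` and vanishes at all the interpolation points.
  refine ⟨A, B, hB0, hB, sub_eq_zero.mp <| eq_zero_of_natDegree_lt_card_of_eval_eq_zero _
    (Subtype.val_injective.comp t.injective) (fun i => ?_) ?_⟩
  · simp only [Function.comp_apply, eval_sub, eval_mul, hmap_eval, hABt, hc]
    push_cast
    ring
  · have hA' := natDegree_map_le (f := M.subtype) (p := A)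
    have hB' := natDegree_map_le (f := M.subtype) (p := B)
    refine (natDegree_sub_le _ _).trans_lt ?_
    simp only [Fintype.card_fin, max_lt_iff]
    constructor <;> exact natDegree_mul_le.trans_lt (by omega)

theorem mem_lifts_of_isCoprime_of_eval_eq_mul {N D : L[X]} (hND : IsCoprime N D) (hD : D.Monic)
    {T : Set M} (hT : T.Infinite) (hNT : ∀ t ∈ T, ∃ c : M, N.eval ↑t = c * D.eval ↑t) :
    N ∈ lifts M.subtype ∧ D ∈ lifts M.subtype := by
  obtain ⟨A, B, hB0, hBD, hAB⟩ := exists_map_mul_eq_map_mul hT hNT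
  set b : L := ↑B.leadingCoeff
  have hb : b ≠ 0 := by simpa [b] using hB0
  have hdvd : D ∣ B.map M.subtype :=
    hND.symm.dvd_of_dvd_mul_right ⟨A.map M.subtype, by rw [← hAB, mul_comm]⟩
  have hB : B.map M.subtype = C b * D := by
    rw [eq_leadingCoeff_mul_of_monic_of_dvd_of_natDegree_le hD hdvd
      ((natDegree_map_le).trans hBD), leadingCoeff_map_of_injective M.subtype_injective]
    rfl
  have hA : A.map M.subtype = C b * N :=
    mul_right_cancel₀ hD.ne_zero (by rw [hAB, hB]; ring)
  have hlifts {P : M[X]} {Q : L[X]} (h : P.map M.subtype = C b * Q) : Q ∈ lifts M.subtype := by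
    rw [show Q = C b⁻¹ * P.map M.subtype by
      rw [h, ← mul_assoc, ← C_mul, inv_mul_cancel₀ hb, C_1, one_mul]]
    exact base_mul_mem_lifts B.leadingCoeff⁻¹ ((mem_lifts _).mpr ⟨P, rfl⟩)
  exact ⟨hlifts hA, hlifts hB⟩

theorem mem_lifts_of_eval_mem [Infinite M] {f : L[X]} (hf : ∀ t : M, f.eval ↑t ∈ M) :
    f ∈ lifts M.subtype :=
  (mem_lifts_of_isCoprime_of_eval_eq_mul isCoprime_one_right monic_one Set.infinite_univ
    fun t _ => ⟨⟨_, hf t⟩, by simp⟩).1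

theorem pow_natDegree_mem [Infinite M] {R : L[X]} (hR : ∀ a, R.eval a ∈ M) (a : L) :
    a ^ R.natDegree ∈ M := by
  have hlc (a : L) : R.leadingCoeff * a ^ R.natDegree ∈ M := by
    obtain ⟨b, hb⟩ := (lifts_iff_coeff_lifts _).mp
      (mem_lifts_of_eval_mem (f := R.comp (C a * X)) fun t => by simpa using hR (a * t))
      R.natDegree
    rw [comp_C_mul_X_coeff] at hb
    exact hb ▸ b.2
  rcases eq_or_ne R 0 with rfl | hR0
  · simp [M.one_mem]
  have h1 : R.leadingCoeff ∈ M := by simpa using hlc 1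
  have hlc0 : R.leadingCoeff ≠ 0 := leadingCoeff_ne_zero.mpr hR0
  simpa [hlc0] using M.mul_mem (M.inv_mem h1) (hlc a)

theorem exists_pow_mul_eq_and_natCast_ne_zero {R : Type*} [Semiring R] (q : ℕ) [hq : ExpChar R q]
    {n : ℕ} (hn : n ≠ 0) : ∃ e m : ℕ, q ^ e * m = n ∧ (m : R) ≠ 0 := by
  cases hq with
  | zero => exact ⟨0, n, by simp, Nat.cast_ne_zero.mpr hn⟩
  | prime hp =>
    refine ⟨n.factorization q, n / q ^ n.factorization q, Nat.ordProj_mul_ordCompl_eq_self n q, ?_⟩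
    rw [Ne, CharP.cast_eq_zero_iff R q]
    exact Nat.not_dvd_ordCompl hp hn

theorem exists_pow_expChar_pow_mem [Infinite M] (q : ℕ) [ExpChar L q] {n : ℕ} (hn : n ≠ 0)
    (hpow : ∀ a : L, a ^ n ∈ M) : ∃ e : ℕ, ∀ a : L, a ^ q ^ e ∈ M := by
  obtain ⟨e, m, rfl, hm⟩ := exists_pow_mul_eq_and_natCast_ne_zero (R := L) q hn
  refine ⟨e, fun a => ?_⟩
  have hm1 : 1 ≤ m := Nat.one_le_iff_ne_zero.mpr (by rintro rfl; simp at hm)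
  have hlifts : expand L (q ^ e) ((X + C (a ^ q ^ e)) ^ m) ∈ lifts M.subtype :=
    mem_lifts_of_eval_mem fun t => by
      rw [expand_eval, eval_pow, eval_add, eval_X, eval_C, ← add_pow_expChar_pow, ← pow_mul]
      exact hpow _
  obtain ⟨b, hb⟩ := (lifts_iff_coeff_lifts _).mp hlifts (q ^ e * (m - 1))
  rw [coeff_expand_mul' (pow_pos (expChar_pos L q) e), coeff_X_add_C_pow, Nat.sub_sub_self hm1,
    Nat.choose_symm hm1, Nat.choose_one_right, pow_one] at hb
  simpa [hm] using M.mul_mem (hb ▸ b.2 : a ^ q ^ e * m ∈ M) (M.inv_mem (natCast_mem M m))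

theorem purelyInsepFinExp_of_pow_mem [Infinite M] {n : ℕ} (hn : n ≠ 0)
    (hpow : ∀ a : L, a ^ n ∈ M) : PurelyInsepFinExp M := by
  obtain ⟨q, hq⟩ := ExpChar.exists L
  obtain ⟨e, he⟩ := exists_pow_expChar_pow_mem q hn hpow
  cases hq with
  | zero => exact Or.inl (by simpa using he)
  | prime hp => exact Or.inr ⟨q, e, hp, inferInstance, he⟩

end Descent

namespace RatFunc

variable {L : Type*} [Field L]

theorem eval_num_eq_eval_mul_eval_denom (φ : RatFunc L) {d : L} (hd : φ.denom.eval d ≠ 0) :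
    φ.num.eval d = φ.eval (RingHom.id L) d * φ.denom.eval d := by
  rw [RatFunc.eval, eval₂_id, eval₂_id, div_mul_cancel₀ _ hd]

theorem num_sub_C_mul_denom_ne_zero {φ : RatFunc L} (hφ : ¬∃ c : L, φ = C c) (c : L) :
    φ.num - Polynomial.C c * φ.denom ≠ 0 := by
  refine fun h => hφ ⟨c, ?_⟩
  rw [← φ.num_div_denom, sub_eq_zero.mp h, map_mul, algebraMap_C,
    mul_div_cancel_right₀ _ (algebraMap_ne_zero φ.denom_ne_zero)]

theorem natDegree_num_ne_zero_or_natDegree_denom_ne_zero {φ : RatFunc L}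
    (hφ : ¬∃ c : L, φ = C c) : φ.num.natDegree ≠ 0 ∨ φ.denom.natDegree ≠ 0 := by
  by_contra! h
  refine hφ ⟨φ.num.coeff 0, ?_⟩
  nth_rw 1 [← φ.num_div_denom]
  rw [eq_one_of_monic_natDegree_zero φ.monic_denom h.2, eq_C_of_natDegree_eq_zero h.1, map_one,
    div_one, algebraMap_C, coeff_C_zero]

theorem eventually_exists_eval_num_eq_mul_eval_denom {M : Subfield L} {φ : RatFunc L}
    (hφM : {d : L | φ.eval (RingHom.id L) d ∉ M}.Finite) :
    ∀ᶠ d in cofinite, ∃ c : M, φ.num.eval d = c * φ.denom.eval d := by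
  filter_upwards [eventually_cofinite.mpr hφM,
    (finite_setOfPred_isRoot φ.denom_ne_zero).eventually_cofinite_notMem] with d hdM hd
  exact ⟨⟨_, hdM⟩, eval_num_eq_eval_mul_eval_denom φ hd⟩

end RatFunc

section RatFuncValues

variable {L : Type*} [Field L] {M : Subfield L}

theorem Subfield.infinite_of_ratFunc_eval_mem [Infinite L] {φ : RatFunc L}
    (hφ : ¬∃ c : L, φ = RatFunc.C c) (hφM : {d : L | φ.eval (RingHom.id L) d ∉ M}.Finite) :
    Infinite M := by
  by_contra hM
  rw [not_infinite_iff_finite] at hM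
  have hfin : {d : L | ∃ c : M, φ.num.eval d = c * φ.denom.eval d}.Finite := by
    rw [Set.ofPred_exists]
    refine Set.finite_iUnion fun c => (finite_setOfPred_isRoot
      (RatFunc.num_sub_C_mul_denom_ne_zero hφ c)).subset fun d hd => ?_
    simp [Set.mem_ofPred_eq.mp hd]
  exact Set.infinite_univ ((hfin.union (eventually_cofinite.mp
    (RatFunc.eventually_exists_eval_num_eq_mul_eval_denom hφM))).subset fun d _ => em _)

theorem eval_num_mem_and_eval_denom_mem [Infinite M] {φ : RatFunc L}
    (hφM : {d : L | φ.eval (RingHom.id L) d ∉ M}.Finite) (a : L) :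
    φ.num.eval a ∈ M ∧ φ.denom.eval a ∈ M := by
  have hinj : Function.Injective fun t : M => (t : L) + a :=
    (add_left_injective a).comp Subtype.val_injective
  have hT := frequently_cofinite_iff_infinite.mp (hinj.tendsto_cofinite.eventually
    (RatFunc.eventually_exists_eval_num_eq_mul_eval_denom hφM)).frequently
  obtain ⟨hN, hD⟩ := mem_lifts_of_isCoprime_of_eval_eq_mul
    (φ.isCoprime_num_denom.map (compRingHom (X + C a))) (φ.monic_denom.comp_X_add_C a) hT
    fun t ht => by simpa [eval_comp] using ht
  simp only [lifts_iff_coeff_lifts] at hN hD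
  simpa [coeff_zero_eq_eval_zero, eval_comp] using And.intro (hN 0) (hD 0)

end RatFuncValues

theorem stmt15 {L : Type*} [Field L] [Infinite L] (M : Subfield L)
    (h : ¬ PurelyInsepFinExp M) :
    ¬ ∃ φ : RatFunc L, (¬ ∃ c : L, φ = RatFunc.C c) ∧
      {d : L | RatFunc.eval (RingHom.id L) d φ ∉ M}.Finite := by
  rintro ⟨φ, hφ, hφM⟩
  have : Infinite M := Subfield.infinite_of_ratFunc_eval_mem hφ hφM
  obtain ⟨R, hR, hRM⟩ : ∃ R : L[X], R.natDegree ≠ 0 ∧ ∀ a, R.eval a ∈ M := by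
    rcases RatFunc.natDegree_num_ne_zero_or_natDegree_denom_ne_zero hφ with hN | hD
    · exact ⟨_, hN, fun a => (eval_num_mem_and_eval_denom_mem hφM a).1⟩
    · exact ⟨_, hD, fun a => (eval_num_mem_and_eval_denom_mem hφM a).2⟩
  exact h (purelyInsepFinExp_of_pow_mem hR (pow_natDegree_mem hRM))
end

section
/- Let D be a pseudovaluation domain with associated valuation domain V ≠ D, common maximal ideal m, field of fractions K, valuation v, and suppose the residue field L = V/m is finite of order q. Then the rational function φ(x) = 1/(x^q − x + 1) lies in Int^R(K,D) = {ψ ∈ K(x) : ψ(a) ∈ D for all a ∈ K}, and moreover v(φ(a)) > 0 when v(a) < 0 while φ(a) ∈ 1 + m when v(a) ≥ 0. -/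
/-- Let `D` be a pseudovaluation domain, encoded via the valuation `v` of its associated
valuation domain `V = v.integer` (multiplicative notation: additive `v(a) > 0` reads
`v a < 1`, `v(a) < 0` reads `1 < v a`): `D ⊆ V`, the maximal ideal `m = {x | v x < 1}`
of `V` is contained in `D` (so it is the common maximal ideal), and `V ≠ D`.  Assume the
residue field `L = V/m` is finite of order `q`, expressed by `2 ≤ q` and
`x^q ≡ x mod m` for every `x ∈ V`.  Then `φ(x) = 1/(x^q − x + 1)` is integer-valued on
all of `K` over `D`, with `v(φ(a)) > 0` when `v(a) < 0` and `φ(a) ∈ 1 + m` when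
`v(a) ≥ 0`. -/
theorem stmt16 {K Γ₀ : Type*} [Field K] [LinearOrderedCommGroupWithZero Γ₀]
    (v : Valuation K Γ₀) (D : Subring K) [IsFractionRing D K]
    (hDV : ∀ x : K, x ∈ D → v x ≤ 1)
    (hmD : ∀ x : K, v x < 1 → x ∈ D)
    (hne : ∃ x : K, v x ≤ 1 ∧ x ∉ D)
    (q : ℕ) (hq2 : 2 ≤ q)
    (hres : ∀ x : K, v x ≤ 1 → v (x ^ q - x) < 1) :
    (∀ a : K, (a ^ q - a + 1)⁻¹ ∈ D) ∧
    (∀ a : K, 1 < v a → v ((a ^ q - a + 1)⁻¹) < 1) ∧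
    (∀ a : K, v a ≤ 1 → ∃ b : K, v b < 1 ∧ (a ^ q - a + 1)⁻¹ = 1 + b) := by
  -- value of the denominator when v a ≤ 1
  have key1 : ∀ a : K, v a ≤ 1 → v (a ^ q - a + 1) = 1 := by
    intro a ha
    have h := hres a ha
    have := v.map_add_eq_of_lt_right (y := (1 : K)) (x := a ^ q - a)
      (by simpa using h)
    simpa using this
  -- value of the denominator when 1 < v a
  have key2 : ∀ a : K, 1 < v a → v (a ^ q - a + 1) = v a ^ q := by
    intro a ha
    have hpow : v a < v a ^ q := by
      have := pow_lt_pow_right₀ ha (show 1 < q by omega)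
      simpa using this
    have h1a : v (1 - a) ≤ v a := by
      calc v (1 - a) ≤ max (v 1) (v a) := v.map_sub _ _
        _ = v a := by simp [max_eq_right ha.le]
    have heq : a ^ q - a + 1 = a ^ q + (1 - a) := by ring
    rw [heq, Valuation.map_add_eq_of_lt_left, v.map_pow]
    · rw [v.map_pow]; exact lt_of_le_of_lt h1a hpow
  -- second conclusion
  have c2 : ∀ a : K, 1 < v a → v ((a ^ q - a + 1)⁻¹) < 1 := by
    intro a ha
    rw [map_inv₀, key2 a ha]
    have : (1 : Γ₀) < v a ^ q := one_lt_pow₀ ha (by omega)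
    rw [inv_lt_one₀ (lt_trans zero_lt_one this)]
    exact this
  -- third conclusion
  have c3 : ∀ a : K, v a ≤ 1 → ∃ b : K, v b < 1 ∧ (a ^ q - a + 1)⁻¹ = 1 + b := by
    intro a ha
    set s := a ^ q - a + 1 with hs
    have hvs : v s = 1 := key1 a ha
    have hs0 : s ≠ 0 := fun h => by simp [h] at hvs
    refine ⟨s⁻¹ - 1, ?_, by ring⟩
    have : s⁻¹ - 1 = (a - a ^ q) * s⁻¹ := by
      field_simp
      ring
    rw [this, v.map_mul, map_inv₀, hvs, inv_one, mul_one]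
    have := hres a ha
    rwa [← v.map_neg, neg_sub] at this
  refine ⟨?_, c2, c3⟩
  intro a
  rcases le_or_gt (v a) 1 with ha | ha
  · obtain ⟨b, hb, heq⟩ := c3 a ha
    rw [heq]
    exact add_mem (one_mem D) (hmD b hb)
  · exact hmD _ (c2 a ha)
end
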